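/- Let W be a Coxeter group and W_J a standard parabolic subgroup. The Bruhat order on minimal coset representatives is preserved by multiplication by the longest element of W_J when W_J is finite: for minimal representatives y, y' of right W_J-cosets, y ≤ y' implies w₀(J)·y ≤ w₀(J)·y'. -/

import Mathlib

/-- The Bruhat order on a Coxeter group, via the subword property: `v ≤ w` iff every reduced
word for `w` has a sublist which is a reduced word for `v`. -/
def CoxeterSystem.bruhatLE {B W : Type*} [Group W] {M : CoxeterMatrix B}
    (cs : CoxeterSystem M W) (v w : W) : Prop :=
  ∀ l : List B, cs.IsReduced l → cs.wordProd l = w →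
    ∃ l2 : List B, l2.Sublist l ∧ cs.IsReduced l2 ∧ cs.wordProd l2 = v

set_option linter.unusedSectionVars false

namespace BruhatAux

open CoxeterSystem List

variable {B W : Type*} [Group W] {M : CoxeterMatrix B} (cs : CoxeterSystem M W)

local prefix:100 "σ" => cs.simple
local prefix:100 "π" => cs.wordProd
local prefix:100 "ℓ" => cs.length
local prefix:100 "ris" => cs.rightInvSeq
local prefix:100 "lis" => cs.leftInvSeq

section PermRep

variable [DecidableEq W]

def etaFun (i : B) : W × ZMod 2 → W × ZMod 2 :=
  fun x => (σ i * x.1 * σ i, x.2 + if x.1 = σ i then 1 else 0)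

lemma etaFun_involutive (i : B) : Function.Involutive (etaFun cs i) := by
  intro x
  simp only [etaFun]
  have h1 : σ i * (σ i * x.1 * σ i) * σ i = x.1 := by
    simp [mul_assoc, cs.simple_mul_simple_cancel_left, cs.simple_mul_simple_self]
  have h2 : (σ i * x.1 * σ i = σ i) ↔ (x.1 = σ i) := by
    constructor
    · intro h
      have := congrArg (fun z => σ i * z * σ i) h
      simpa [mul_assoc, cs.simple_mul_simple_cancel_left, cs.simple_mul_simple_self] using this
    · intro h
      rw [h]
      simp [cs.simple_mul_simple_self]
  ext
  · exact h1
  · simp only [h2]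
    rcases eq_or_ne x.1 (σ i) with h | h
    · simp [h, add_assoc]
      rfl
    · simp [h]

def eta (i : B) : Equiv.Perm (W × ZMod 2) := (etaFun_involutive cs i).toPerm

lemma eta_apply (i : B) (x : W × ZMod 2) :
    eta cs i x = (σ i * x.1 * σ i, x.2 + if x.1 = σ i then 1 else 0) := rfl

lemma eta_mul_pow (i j : B) (k : ℕ) (x : W × ZMod 2) :
    ((eta cs i * eta cs j) ^ k) x =
      ((σ i * σ j) ^ k * x.1 * ((σ i * σ j) ^ k)⁻¹,
        x.2 + ∑ l ∈ Finset.range (2 * k),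
          if x.1 = ((σ i * σ j)⁻¹) ^ l * σ j then 1 else 0) := by
  induction k generalizing x with
  | zero => simp
  | succ k ih =>
    have hpinv : (σ i * σ j)⁻¹ = σ j * σ i := by
      rw [mul_inv_rev, cs.inv_simple, cs.inv_simple]
    have hsp : σ j * (σ i * σ j) = (σ i * σ j)⁻¹ * σ j := by
      rw [hpinv]; group
    rw [pow_succ, Equiv.Perm.mul_apply, ih ((eta cs i * eta cs j) x)]
    have hcond : (σ j * x.1 * σ j = σ i) ↔ (x.1 = (σ i * σ j)⁻¹ * σ j) := by
      rw [hpinv, mul_assoc]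
      constructor
      · intro h
        have := congrArg (fun z => σ j * z * σ j) h
        simpa [mul_assoc, cs.simple_mul_simple_cancel_left, cs.simple_mul_simple_self]
          using this
      · intro h
        rw [h]
        simp [mul_assoc, cs.simple_mul_simple_cancel_left, cs.simple_mul_simple_self]
    have hx : (eta cs i * eta cs j) x =
        ((σ i * σ j) * x.1 * (σ i * σ j)⁻¹,
          x.2 + ((if x.1 = σ j then 1 else 0) +
            if x.1 = (σ i * σ j)⁻¹ * σ j then 1 else 0)) := by
      rw [Equiv.Perm.mul_apply, eta_apply, eta_apply]
      ext
      · simp only [hpinv]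
        group
      · simp only [hcond, add_assoc]
    rw [hx]
    ext
    · simp only []
      simp only [pow_succ, mul_inv_rev, mul_assoc]
    · simp only []
      have key : ∀ l : ℕ, (σ i * σ j)⁻¹ * (((σ i * σ j)⁻¹) ^ l * σ j) * (σ i * σ j)
          = ((σ i * σ j)⁻¹) ^ (l + 2) * σ j := by
        intro l
        rw [← mul_assoc ((σ i * σ j)⁻¹) (((σ i * σ j)⁻¹) ^ l) (σ j), ← pow_succ',
          mul_assoc, hsp, ← mul_assoc, ← pow_succ]
      have cancel1 : ∀ z : W,
          (σ i * σ j)⁻¹ * ((σ i * σ j) * z * (σ i * σ j)⁻¹) * (σ i * σ j) = z := by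
        intro z; group
      have cancel2 : ∀ z : W,
          (σ i * σ j) * ((σ i * σ j)⁻¹ * z * (σ i * σ j)) * (σ i * σ j)⁻¹ = z := by
        intro z; group
      have hterm : ∀ l : ℕ,
          ((σ i * σ j) * x.1 * (σ i * σ j)⁻¹ = ((σ i * σ j)⁻¹) ^ l * σ j)
            ↔ (x.1 = ((σ i * σ j)⁻¹) ^ (l + 2) * σ j) := by
        intro l
        constructor
        · intro h
          refine Eq.trans ?_ (key l)
          rw [← h]
          exact (cancel1 x.1).symm
        · intro h
          rw [h, ← key l]
          exact cancel2 _
      simp only [hterm]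
      have hsplit : ∑ l ∈ Finset.range (2 * (k + 1)),
            (if x.1 = ((σ i * σ j)⁻¹) ^ l * σ j then (1 : ZMod 2) else 0)
          = (∑ l ∈ Finset.range (2 * k),
              if x.1 = ((σ i * σ j)⁻¹) ^ (l + 2) * σ j then (1 : ZMod 2) else 0)
            + ((if x.1 = ((σ i * σ j)⁻¹) ^ 1 * σ j then (1 : ZMod 2) else 0)
            + (if x.1 = ((σ i * σ j)⁻¹) ^ 0 * σ j then (1 : ZMod 2) else 0)) := by
        have e1 : 2 * (k + 1) = (2 * k + 1) + 1 := by ring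
        rw [e1, Finset.sum_range_succ', Finset.sum_range_succ']
        have e2 : ∀ l : ℕ, l + 1 + 1 = l + 2 := fun l => by ring
        simp only [e2, zero_add, add_assoc]
      rw [hsplit]
      simp only [pow_zero, pow_one, one_mul]
      ring

lemma eta_liftable : M.IsLiftable (fun i => eta cs i) := by
  intro i j
  apply Equiv.ext
  intro x
  rw [eta_mul_pow]
  have hp : (σ i * σ j) ^ M i j = 1 := cs.simple_mul_simple_pow i j
  have hpinv : ((σ i * σ j)⁻¹) ^ M i j = 1 := by rw [inv_pow, hp, inv_one]
  have hsum : ∑ l ∈ Finset.range (2 * M i j),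
      (if x.1 = ((σ i * σ j)⁻¹) ^ l * σ j then (1 : ZMod 2) else 0) = 0 := by
    have e1 : 2 * M i j = M i j + M i j := by ring
    rw [e1, Finset.sum_range_add]
    have : ∀ l : ℕ, ((σ i * σ j)⁻¹) ^ (M i j + l) = ((σ i * σ j)⁻¹) ^ l := by
      intro l
      rw [pow_add, hpinv, one_mul]
    simp only [this]
    rw [← two_mul]
    have h2 : (2 : ZMod 2) = 0 := rfl
    rw [h2, zero_mul]
  rw [hp, hsum]
  simp

def phi : W →* Equiv.Perm (W × ZMod 2) :=
  cs.lift ⟨fun i => eta cs i, eta_liftable cs⟩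

lemma phi_simple (i : B) : phi cs (σ i) = eta cs i :=
  cs.lift_apply_simple (eta_liftable cs) i

lemma phi_wordProd (ω : List B) (x : W × ZMod 2) :
    phi cs (π ω) x = (π ω * x.1 * (π ω)⁻¹, x.2 + ((ris ω).count x.1 : ZMod 2)) := by
  induction ω generalizing x with
  | nil => simp
  | cons i ω ih =>
    rw [wordProd_cons, map_mul, Equiv.Perm.mul_apply, ih x, phi_simple, eta_apply]
    have hris : ris (i :: ω) = ((π ω)⁻¹ * σ i * π ω) :: ris ω := rfl
    have hcond : (π ω * x.1 * (π ω)⁻¹ = σ i) ↔ (x.1 = (π ω)⁻¹ * σ i * π ω) := by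
      constructor
      · intro h
        have := congrArg (fun z => (π ω)⁻¹ * z * π ω) h
        simpa [mul_assoc] using this
      · intro h
        rw [h]
        group
    ext
    · simp only [wordProd_cons, mul_inv_rev, inv_simple, mul_assoc]
    · simp only [hris, List.count_cons, hcond]
      push_cast
      rcases eq_or_ne x.1 ((π ω)⁻¹ * σ i * π ω) with h | h
      · simp [h]
        ring
      · simp [h, Ne.symm h]

lemma count_ris_mod_two_invariant {ω ω' : List B} (h : π ω = π ω') (t : W) :
    ((ris ω).count t : ZMod 2) = ((ris ω').count t : ZMod 2) := by
  have h1 := phi_wordProd cs ω (t, 0)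
  have h2 := phi_wordProd cs ω' (t, 0)
  rw [h] at h1
  rw [h1] at h2
  have := congrArg Prod.snd h2
  simpa using this

lemma rightInvSeq_append (a b : List B) :
    ris (a ++ b) = (ris a).map (fun x => (π b)⁻¹ * x * π b) ++ ris b := by
  induction a with
  | nil => simp
  | cons i a ih =>
    have h1 : ris ((i :: a) ++ b) = (π (a ++ b))⁻¹ * σ i * π (a ++ b) :: ris (a ++ b) := rfl
    have h2 : ris (i :: a) = (π a)⁻¹ * σ i * π a :: ris a := rfl
    rw [h1, ih, h2]
    simp [wordProd_append, mul_inv_rev, mul_assoc]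

lemma leftInvSeq_eq_map_rightInvSeq (ω : List B) :
    lis ω = (ris ω).map (fun x => π ω * x * (π ω)⁻¹) := by
  induction ω with
  | nil => simp
  | cons i ω ih =>
    have h2 : ris (i :: ω) = (π ω)⁻¹ * σ i * π ω :: ris ω := rfl
    have h3 : lis (i :: ω) = σ i :: (lis ω).map (MulAut.conj (σ i)) := rfl
    rw [h3, ih, h2]
    simp only [List.map_map, List.map_cons, wordProd_cons, mul_inv_rev, inv_simple]
    congr 1
    · simp [mul_assoc, cs.simple_mul_simple_cancel_left]
    · apply List.map_congr_left
      intro x _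
      simp [MulAut.conj_apply, mul_assoc, inv_simple]

lemma conj_injective (a b : W) : Function.Injective (fun x : W => a * x * b) := by
  intro x y hxy
  simp only [] at hxy
  exact mul_left_cancel (mul_right_cancel hxy)

lemma count_ris_reflection_word (r : List B) (i : B) :
    ((ris (r ++ [i] ++ r.reverse)).count (π r * σ i * (π r)⁻¹) : ZMod 2) = 1 := by
  have hrev : π (r.reverse) = (π r)⁻¹ := by simp
  rw [rightInvSeq_append, rightInvSeq_append]
  rw [List.map_append, List.count_append, List.count_append]
  have hf : ∀ x : W, (π r.reverse)⁻¹ * x * π r.reverse = π r * x * (π r)⁻¹ := by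
    intro x; rw [hrev, inv_inv]
  -- first part: map over (map g (ris r))
  have e1 : (((ris r).map (fun x => (π [i])⁻¹ * x * π [i])).map
        (fun x => (π r.reverse)⁻¹ * x * π r.reverse)).count (π r * σ i * (π r)⁻¹)
      = (ris r).count (σ i) := by
    rw [List.map_map]
    have : ((fun x => (π r.reverse)⁻¹ * x * π r.reverse) ∘ (fun x => (π [i])⁻¹ * x * π [i]))
        = fun x : W => (π r * ((π [i])⁻¹)) * x * (π [i] * (π r)⁻¹) := by
      funext x
      simp [hrev, mul_assoc]
    rw [this]
    have hval : π r * ((π [i])⁻¹) * (σ i) * (π [i] * (π r)⁻¹) = π r * σ i * (π r)⁻¹ := by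
      simp [mul_assoc, cs.simple_mul_simple_cancel_left]
    rw [← hval, List.count_map_of_injective _ _ (conj_injective _ _)]
  -- middle: ris [i] mapped
  have e2 : (((ris [i]).map (fun x => (π r.reverse)⁻¹ * x * π r.reverse))).count
      (π r * σ i * (π r)⁻¹) = 1 := by
    rw [cs.rightInvSeq_singleton]
    simp [hf]
  -- last part
  have e3 : ((ris r.reverse).count (π r * σ i * (π r)⁻¹)) = (ris r).count (σ i) := by
    rw [cs.rightInvSeq_reverse, List.count_reverse, leftInvSeq_eq_map_rightInvSeq,
      List.count_map_of_injective _ _ (conj_injective _ _)]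
  rw [e1, e2, e3]
  push_cast
  have : ∀ a : ZMod 2, a + 1 + a = 1 := by decide
  exact this _

theorem strong_exchange_right {t w : W} (ht : cs.IsReflection t) (hlt : ℓ (w * t) < ℓ w)
    {ω : List B} (hω : π ω = w) : t ∈ ris ω := by
  have htt : t * t = 1 := ht.mul_self
  obtain ⟨u, i, hti⟩ := ht
  obtain ⟨r, hr⟩ := cs.wordProd_surjective u
  have htword : π (r ++ [i] ++ r.reverse) = t := by
    rw [wordProd_append, wordProd_append, wordProd_singleton, hti, hr]
    simp [hr]
  have hcount1 : ((ris (r ++ [i] ++ r.reverse)).count t : ZMod 2) = 1 := by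
    have := count_ris_reflection_word cs r i
    rw [hr] at this
    rw [hti]
    exact this
  obtain ⟨c, hc_red, hc⟩ := cs.exists_reduced_word' (w * t)
  have hprod : π (c ++ (r ++ [i] ++ r.reverse)) = π ω := by
    rw [wordProd_append, htword, ← hc, hω, mul_assoc, htt, mul_one]
  have hnotmem : t ∉ ris c := by
    intro hmem
    have hinv := cs.isRightInversion_of_mem_rightInvSeq hc_red hmem
    rw [← hc] at hinv
    have : ℓ (w * t * t) < ℓ (w * t) := hinv.2
    rw [mul_assoc, htt, mul_one] at this
    omega
  have hcount : ((ris ω).count t : ZMod 2) = 1 := by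
    rw [count_ris_mod_two_invariant cs hprod.symm t, rightInvSeq_append, List.count_append]
    have hmapc : ((ris c).map (fun x => (π (r ++ [i] ++ r.reverse))⁻¹ * x *
        π (r ++ [i] ++ r.reverse))).count t = (ris c).count t := by
      have hfix : (π (r ++ [i] ++ r.reverse))⁻¹ * t * π (r ++ [i] ++ r.reverse) = t := by
        rw [htword]
        group
      rw [← hfix, List.count_map_of_injective _ _ (conj_injective _ _), hfix]
    rw [hmapc, List.count_eq_zero_of_not_mem hnotmem]
    push_cast
    rw [hcount1]
    ring
  by_contra hmem
  rw [List.count_eq_zero_of_not_mem hmem] at hcount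
  simpa using hcount

theorem strong_exchange_left {t w : W} (ht : cs.IsReflection t) (hlt : ℓ (t * w) < ℓ w)
    {ω : List B} (hω : π ω = w) : t ∈ lis ω := by
  have h1 : ℓ (w⁻¹ * t) < ℓ w⁻¹ := by
    have e : ℓ (w⁻¹ * t) = ℓ (t * w) := by
      rw [← cs.length_inv (w⁻¹ * t), mul_inv_rev, inv_inv, ht.inv]
    rw [e, cs.length_inv]
    exact hlt
  have hmem := strong_exchange_right cs ht h1 (ω := ω.reverse) (by rw [wordProd_reverse, hω])
  rw [cs.rightInvSeq_reverse] at hmem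
  exact List.mem_reverse.mp hmem

theorem exists_eraseIdx_left {t w : W} (ht : cs.IsReflection t) (hlt : ℓ (t * w) < ℓ w)
    {ω : List B} (hω : π ω = w) :
    ∃ k, k < ω.length ∧ π (ω.eraseIdx k) = t * w := by
  have hmem := strong_exchange_left cs ht hlt hω
  obtain ⟨k, hk, hget⟩ := List.mem_iff_getElem.mp hmem
  refine ⟨k, by simpa using hk, ?_⟩
  have h := cs.getD_leftInvSeq_mul_wordProd ω k
  rw [List.getD_eq_getElem _ _ hk, hget, hω] at h
  exact h.symm

theorem exists_reduced_sublist (ω : List B) :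
    ∃ c, c.Sublist ω ∧ cs.IsReduced c ∧ π c = π ω := by
  induction ω with
  | nil => exact ⟨[], List.Sublist.refl _, by simp [CoxeterSystem.IsReduced], rfl⟩
  | cons i ω ih =>
    obtain ⟨c, hsub, hred, hprod⟩ := ih
    rcases cs.length_simple_mul (π c) i with h | h
    · refine ⟨i :: c, hsub.cons₂ i, ?_, ?_⟩
      · show ℓ (π (i :: c)) = (i :: c).length
        rw [wordProd_cons, h, List.length_cons, hred]
      · rw [wordProd_cons, wordProd_cons, hprod]
    · have hne := cs.length_simple_mul_ne (π c) i
      have hlt : ℓ (σ i * π c) < ℓ (π c) := by omega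
      obtain ⟨k, hk, heq⟩ := exists_eraseIdx_left cs (cs.isReflection_simple i) hlt rfl
      refine ⟨c.eraseIdx k, ?_, ?_, ?_⟩
      · exact ((c.eraseIdx_sublist k).trans hsub).trans (List.sublist_cons_self i ω)
      · show ℓ (π (c.eraseIdx k)) = (c.eraseIdx k).length
        have hl := List.length_eraseIdx_add_one hk
        rw [heq]
        have : ℓ (π c) = c.length := hred
        omega
      · rw [heq, wordProd_cons, hprod]

/-- A single step in the Bruhat chain order. -/
def bstep (v w : W) : Prop := ∃ t, cs.IsReflection t ∧ w = t * v ∧ ℓ v < ℓ w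

/-- Bruhat chain order. -/
def ble : W → W → Prop := Relation.ReflTransGen (bstep cs)

lemma ble_length_le {v w : W} (h : ble cs v w) : ℓ v ≤ ℓ w := by
  induction h with
  | refl => exact le_refl _
  | tail _ hstep ih =>
    obtain ⟨t, _, _, hlt⟩ := hstep
    exact le_trans ih (le_of_lt hlt)

lemma bruhatLE_refl (v : W) : cs.bruhatLE v v :=
  fun l h1 h2 => ⟨l, List.Sublist.refl l, h1, h2⟩

lemma bruhatLE_trans {u v w : W} (h1 : cs.bruhatLE u v) (h2 : cs.bruhatLE v w) :
    cs.bruhatLE u w := by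
  intro l hred hprod
  obtain ⟨l2, hsub2, hred2, hprod2⟩ := h2 l hred hprod
  obtain ⟨l1, hsub1, hred1, hprod1⟩ := h1 l2 hred2 hprod2
  exact ⟨l1, hsub1.trans hsub2, hred1, hprod1⟩

lemma bruhatLE_of_bstep {v w : W} (h : bstep cs v w) : cs.bruhatLE v w := by
  obtain ⟨t, ht, hw, hlen⟩ := h
  intro l hred hprod
  have hv : t * w = v := by rw [hw, ← mul_assoc, ht.mul_self, one_mul]
  have hlt : ℓ (t * w) < ℓ w := by rw [hv]; exact hlen
  obtain ⟨k, hk, heq⟩ := exists_eraseIdx_left cs ht hlt hprod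
  obtain ⟨c, hcsub, hcred, hcprod⟩ := exists_reduced_sublist cs (l.eraseIdx k)
  exact ⟨c, hcsub.trans (l.eraseIdx_sublist k), hcred, by rw [hcprod, heq, hv]⟩

lemma bruhatLE_of_ble {v w : W} (h : ble cs v w) : cs.bruhatLE v w := by
  induction h with
  | refl => exact bruhatLE_refl cs v
  | tail _ hstep ih => exact bruhatLE_trans cs ih (bruhatLE_of_bstep cs hstep)

theorem master (n : ℕ) :
    ∀ a : List B, a.length ≤ n → cs.IsReduced a → ∀ c : List B, c.Sublist a →
      cs.IsReduced c → ble cs (π c) (π a) := by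
  induction n using Nat.strong_induction_on with
  | _ n IHn =>
  -- Lemma K
  have hK : ∀ x' : W, ℓ x' ≤ n → ∀ t : W, cs.IsReflection t → ∀ x : W, x' = t * x →
      ℓ x < ℓ x' → ∀ i : B, ℓ (σ i * x') < ℓ x' → ℓ x < ℓ (σ i * x) →
      ble cs (σ i * x) x' := by
    intro x' hx'n t ht x hxt hlen i hdesc hasc
    have hx : t * x' = x := by rw [hxt, ← mul_assoc, ht.mul_self, one_mul]
    obtain ⟨nw, hnred, hnprod⟩ := cs.exists_reduced_word' (σ i * x')
    have hxu : σ i * (σ i * x') = x' := by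
      rw [← mul_assoc, cs.simple_mul_simple_self, one_mul]
    have hulen : ℓ x' = ℓ (σ i * x') + 1 := by
      rcases cs.length_simple_mul (σ i * x') i with h | h <;> rw [hxu] at h <;> omega
    have hmred : cs.IsReduced (i :: nw) := by
      show ℓ (π (i :: nw)) = (i :: nw).length
      rw [wordProd_cons, ← hnprod, hxu, List.length_cons]
      have : ℓ (σ i * x') = nw.length := by rw [hnprod]; exact hnred
      omega
    have hmprod : π (i :: nw) = x' := by rw [wordProd_cons, ← hnprod, hxu]
    have hlt2 : ℓ (t * x') < ℓ x' := by rw [hx]; exact hlen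
    obtain ⟨k, hk, heq⟩ := exists_eraseIdx_left cs ht hlt2 hmprod
    rw [hx] at heq
    match k with
    | 0 =>
      have hxeq : x = π nw := by
        simpa using heq.symm
      have : σ i * x = x' := by rw [hxeq, ← hnprod, hxu]
      rw [this]
      exact Relation.ReflTransGen.refl
    | k + 1 =>
      have herase : (i :: nw).eraseIdx (k + 1) = i :: nw.eraseIdx k := rfl
      rw [herase, wordProd_cons] at heq
      have hpe : π (nw.eraseIdx k) = σ i * x := by
        rw [← heq, ← mul_assoc, cs.simple_mul_simple_self, one_mul]
      obtain ⟨c', hc'sub, hc'red, hc'prod⟩ := exists_reduced_sublist cs (nw.eraseIdx k)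
      have hble : ble cs (σ i * x) (π nw) := by
        have hn1 : n - 1 < n := by omega
        have hnwlen : nw.length ≤ n - 1 := by
          have : ℓ (σ i * x') = nw.length := by rw [hnprod]; exact hnred
          omega
        have := IHn (n - 1) hn1 nw hnwlen hnred c'
          (hc'sub.trans (nw.eraseIdx_sublist k)) hc'red
        rw [hc'prod, hpe] at this
        exact this
      have hstep : bstep cs (π nw) x' := by
        refine ⟨σ i, cs.isReflection_simple i, by rw [← hnprod, hxu], ?_⟩
        rw [← hnprod]
        omega
      exact Relation.ReflTransGen.tail hble hstep
  -- monotone lifting along chains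
  have hLE : ∀ y : W, ℓ y ≤ n → ∀ x : W, ble cs x y → ∀ i : B,
      ℓ x < ℓ (σ i * x) → ℓ y < ℓ (σ i * y) → ble cs (σ i * x) (σ i * y) := by
    intro y hyn x hxy i
    induction hxy using Relation.ReflTransGen.head_induction_on with
    | refl => intro _ _; exact Relation.ReflTransGen.refl
    | head hstep hrest ih =>
      intro ha hy
      rename_i a b
      obtain ⟨t, ht, hb, hab⟩ := hstep
      rcases cs.length_simple_mul b i with hcase | hcase
      · -- ascent at b
        have hbasc : ℓ b < ℓ (σ i * b) := by omega
        have ih' := ih hbasc hy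
        have hstep2 : bstep cs (σ i * a) (σ i * b) := by
          refine ⟨σ i * t * σ i, ?_, ?_, ?_⟩
          · have := ht.conj (σ i)
            rwa [cs.inv_simple] at this
          · rw [hb]
            simp [mul_assoc, cs.simple_mul_simple_cancel_left]
          · have haa : ℓ (σ i * a) = ℓ a + 1 := by
              have := cs.length_simple_mul a i
              omega
            omega
        exact Relation.ReflTransGen.head hstep2 ih'
      · -- descent at b : use K
        have hbdesc : ℓ (σ i * b) < ℓ b := by
          have := cs.length_simple_mul_ne b i
          omega
        have hbn : ℓ b ≤ n := le_trans (ble_length_le cs hrest) hyn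
        have h1 : ble cs (σ i * a) b := hK b hbn t ht a hb hab i hbdesc ha
        have h2 : bstep cs y (σ i * y) :=
          ⟨σ i, cs.isReflection_simple i, rfl, hy⟩
        exact Relation.ReflTransGen.tail (h1.trans hrest) h2
  -- main statement
  intro a halen hared c hsub hcred
  rcases eq_or_ne c.length a.length with hlen | hlen
  · rw [hsub.eq_of_length hlen]
    exact Relation.ReflTransGen.refl
  · have hclen : c.length < a.length := lt_of_le_of_ne hsub.length_le hlen
    match a, hsub with
    | i :: a₁, hsub =>
      have ha₁red : cs.IsReduced a₁ := hared.drop 1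
      have ha₁len : a₁.length ≤ n - 1 := by
        simp only [List.length_cons] at halen
        omega
      have hn1 : n - 1 < n := by
        simp only [List.length_cons] at halen
        omega
      cases hsub with
      | cons _ h =>
        have hble := IHn (n - 1) hn1 a₁ ha₁len ha₁red c h hcred
        have e1 : ℓ (π a₁) = a₁.length := ha₁red
        have e2 : ℓ (π (i :: a₁)) = a₁.length + 1 := by
          rw [hared]; simp
        have hstep : bstep cs (π a₁) (π (i :: a₁)) := by
          refine ⟨σ i, cs.isReflection_simple i, cs.wordProd_cons i a₁, ?_⟩
          omega
        exact Relation.ReflTransGen.tail hble hstep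
      | cons_cons _ h =>
        rename_i c₁
        have hc₁red : cs.IsReduced c₁ := hcred.drop 1
        have hble := IHn (n - 1) hn1 a₁ ha₁len ha₁red c₁ h hc₁red
        have hasc1 : ℓ (π c₁) < ℓ (σ i * π c₁) := by
          have e1 : ℓ (π c₁) = c₁.length := hc₁red
          have e2 : ℓ (π (i :: c₁)) = c₁.length + 1 := by rw [hcred]; simp
          rw [wordProd_cons] at e2
          omega
        have hasc2 : ℓ (π a₁) < ℓ (σ i * π a₁) := by
          have e1 : ℓ (π a₁) = a₁.length := ha₁red
          have e2 : ℓ (π (i :: a₁)) = a₁.length + 1 := by rw [hared]; simp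
          rw [wordProd_cons] at e2
          omega
        have := hLE (π a₁) (by
          have e1 : ℓ (π a₁) = a₁.length := ha₁red
          omega) (π c₁) hble i hasc1 hasc2
        rw [wordProd_cons, wordProd_cons]
        exact this

theorem bruhatLE_of_subword {a c : List B} (hared : cs.IsReduced a) (hcred : cs.IsReduced c)
    (hsub : c.Sublist a) : cs.bruhatLE (π c) (π a) :=
  bruhatLE_of_ble cs (master cs a.length a (le_refl _) hared c hsub hcred)

lemma wordProd_mem_closure {J : Set B} {ω : List B} (hω : ∀ b ∈ ω, b ∈ J) :
    π ω ∈ Subgroup.closure (cs.simple '' J) := by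
  induction ω with
  | nil =>
    rw [wordProd_nil]
    exact Subgroup.one_mem _
  | cons i ω ih =>
    rw [wordProd_cons]
    exact Subgroup.mul_mem _ (Subgroup.subset_closure ⟨i, hω i (by simp), rfl⟩)
      (ih fun b hb => hω b (by simp [hb]))

lemma exists_J_word {J : Set B} {p : W} (hp : p ∈ Subgroup.closure (cs.simple '' J)) :
    ∃ ω : List B, (∀ b ∈ ω, b ∈ J) ∧ π ω = p := by
  induction hp using Subgroup.closure_induction with
  | mem x hx =>
    obtain ⟨i, hiJ, rfl⟩ := hx
    exact ⟨[i], by simpa using hiJ, cs.wordProd_singleton i⟩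
  | one => exact ⟨[], by simp, cs.wordProd_nil⟩
  | mul x y _ _ hx hy =>
    obtain ⟨ω₁, h₁, hp₁⟩ := hx
    obtain ⟨ω₂, h₂, hp₂⟩ := hy
    refine ⟨ω₁ ++ ω₂, ?_, by rw [wordProd_append, hp₁, hp₂]⟩
    intro b hb
    rcases List.mem_append.mp hb with h | h
    · exact h₁ b h
    · exact h₂ b h
  | inv x _ hx =>
    obtain ⟨ω, h₁, hp₁⟩ := hx
    exact ⟨ω.reverse, fun b hb => h₁ b (List.mem_reverse.mp hb),
      by rw [wordProd_reverse, hp₁]⟩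

lemma exists_reduced_J_word {J : Set B} {p : W}
    (hp : p ∈ Subgroup.closure (cs.simple '' J)) :
    ∃ ω : List B, (∀ b ∈ ω, b ∈ J) ∧ cs.IsReduced ω ∧ π ω = p := by
  obtain ⟨ω, hωJ, hωp⟩ := exists_J_word cs hp
  obtain ⟨c, hcsub, hcred, hcprod⟩ := exists_reduced_sublist cs ω
  exact ⟨c, fun b hb => hωJ b (hcsub.subset hb), hcred, by rw [hcprod, hωp]⟩

theorem length_mul_of_min {J : Set B} {y : W}
    (hymin : ∀ p ∈ Subgroup.closure (cs.simple '' J), ℓ y ≤ ℓ (p * y)) :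
    ∀ p ∈ Subgroup.closure (cs.simple '' J), ℓ (p * y) = ℓ p + ℓ y := by
  have main : ∀ n : ℕ, ∀ p ∈ Subgroup.closure (cs.simple '' J), ℓ p = n →
      ℓ (p * y) = ℓ p + ℓ y := by
    intro n
    induction n using Nat.strong_induction_on with
    | _ n IH =>
    intro p hp hn
    rcases eq_or_ne p 1 with rfl | hp1
    · simp
    · obtain ⟨ω, hωJ, hωred, hωp⟩ := exists_reduced_J_word cs hp
      have hωne : ω ≠ [] := by
        rintro rfl
        rw [cs.wordProd_nil] at hωp
        exact hp1 hωp.symm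
      match ω, hωne, hωJ, hωred, hωp with
      | j :: ω₁, _, hωJ, hωred, hωp =>
      have hjJ : j ∈ J := hωJ j (by simp)
      have hp'mem : π ω₁ ∈ Subgroup.closure (cs.simple '' J) :=
        wordProd_mem_closure cs (fun b hb => hωJ b (by simp [hb]))
      have hω₁red : cs.IsReduced ω₁ := hωred.drop 1
      have hl1 : ℓ (π ω₁) = ω₁.length := hω₁red
      have hlp : ℓ p = ω₁.length + 1 := by
        rw [← hωp]
        have : ℓ (π (j :: ω₁)) = (j :: ω₁).length := hωred
        simpa using this
      have hIH : ℓ (π ω₁ * y) = ℓ (π ω₁) + ℓ y := by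
        refine IH ω₁.length (by omega) (π ω₁) hp'mem hl1
      obtain ⟨b, hbred, hby⟩ := cs.exists_reduced_word' y
      have hbl : b.length = ℓ y := by rw [hby]; exact hbred.symm
      have hprod2 : π (ω₁ ++ b) = π ω₁ * y := by rw [wordProd_append, ← hby]
      have hc2red : cs.IsReduced (ω₁ ++ b) := by
        show ℓ (π (ω₁ ++ b)) = (ω₁ ++ b).length
        rw [hprod2, hIH, List.length_append]
        omega
      have hpy : p * y = σ j * (π ω₁ * y) := by
        rw [← hωp, wordProd_cons, mul_assoc]
      rcases cs.length_simple_mul (π ω₁ * y) j with hcase | hcase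
      · rw [hpy, hcase, hIH, hlp, hl1]
        omega
      · exfalso
        have hne := cs.length_simple_mul_ne (π ω₁ * y) j
        have hdesc : ℓ (σ j * (π ω₁ * y)) < ℓ (π ω₁ * y) := by omega
        obtain ⟨k, hk, heq⟩ := exists_eraseIdx_left cs (cs.isReflection_simple j)
          hdesc hprod2
        rw [List.length_append] at hk
        by_cases hkl : k < ω₁.length
        · rw [List.eraseIdx_append_of_lt_length hkl, wordProd_append, ← hby] at heq
          have heq2 : π (ω₁.eraseIdx k) = σ j * π ω₁ := by
            have : σ j * (π ω₁ * y) = (σ j * π ω₁) * y := by rw [mul_assoc]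
            rw [this] at heq
            exact mul_right_cancel heq
          have hjp : σ j * π ω₁ = p := by rw [← hωp, wordProd_cons]
          have hlen1 : ℓ (σ j * π ω₁) ≤ (ω₁.eraseIdx k).length := by
            rw [← heq2]; exact cs.length_wordProd_le _
          have hlen2 := List.length_eraseIdx_add_one hkl
          rw [hjp] at hlen1
          omega
        · push_neg at hkl
          rw [List.eraseIdx_append_of_length_le hkl, wordProd_append] at heq
          set q := (π ω₁)⁻¹ * σ j * π ω₁ with hq
          have hqmem : q ∈ Subgroup.closure (cs.simple '' J) := by
            refine Subgroup.mul_mem _ (Subgroup.mul_mem _ (Subgroup.inv_mem _ hp'mem) ?_) hp'mem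
            exact Subgroup.subset_closure ⟨j, hjJ, rfl⟩
          have heq3 : π (b.eraseIdx (k - ω₁.length)) = q * y := by
            have : q * y = (π ω₁)⁻¹ * (σ j * (π ω₁ * y)) := by
              rw [hq]; group
            rw [this, ← heq]
            group
          have hm : k - ω₁.length < b.length := by omega
          have hlen3 : ℓ (q * y) ≤ (b.eraseIdx (k - ω₁.length)).length := by
            rw [← heq3]; exact cs.length_wordProd_le _
          have hlen4 := List.length_eraseIdx_add_one hm
          have := hymin q hqmem
          omega
  intro p hp
  exact main (ℓ p) p hp rfl

end PermRep
end BruhatAux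


/-- For minimal right-coset representatives `y, y'` of a finite standard parabolic subgroup
`W_J` with longest element `w₀(J)`, the Bruhat order is preserved by left multiplication by
`w₀(J)`: `y ≤ y'` implies `w₀(J)·y ≤ w₀(J)·y'`. -/
theorem bruhat_le_mul_longest {B W : Type*} [Group W] {M : CoxeterMatrix B}
    (cs : CoxeterSystem M W) (J : Set B)
    (hfin : ((Subgroup.closure (cs.simple '' J) : Subgroup W) : Set W).Finite)
    (w₀J y y' : W)
    (hw₀mem : w₀J ∈ Subgroup.closure (cs.simple '' J))
    (hw₀max : ∀ u ∈ Subgroup.closure (cs.simple '' J), cs.length u ≤ cs.length w₀J)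
    (hymin : ∀ p ∈ Subgroup.closure (cs.simple '' J), cs.length y ≤ cs.length (p * y))
    (hy'min : ∀ p ∈ Subgroup.closure (cs.simple '' J), cs.length y' ≤ cs.length (p * y'))
    (h : cs.bruhatLE y y') :
    cs.bruhatLE (w₀J * y) (w₀J * y') := by
  classical
  obtain ⟨aJ, haJ, hared, hap⟩ := BruhatAux.exists_reduced_J_word cs hw₀mem
  obtain ⟨b', hb'red, hb'⟩ := cs.exists_reduced_word' y'
  obtain ⟨c, hcsub, hcred, hcprod⟩ := h b' hb'red hb'.symm
  have h8y := BruhatAux.length_mul_of_min cs hymin w₀J hw₀mem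
  have h8y' := BruhatAux.length_mul_of_min cs hy'min w₀J hw₀mem
  have haplen : aJ.length = cs.length w₀J := by rw [← hap]; exact hared.symm
  have hprod1 : cs.wordProd (aJ ++ b') = w₀J * y' := by
    rw [cs.wordProd_append, hap, ← hb']
  have hprod2 : cs.wordProd (aJ ++ c) = w₀J * y := by
    rw [cs.wordProd_append, hap, hcprod]
  have hared1 : cs.IsReduced (aJ ++ b') := by
    show cs.length (cs.wordProd (aJ ++ b')) = (aJ ++ b').length
    rw [hprod1, h8y', List.length_append, haplen]
    have : b'.length = cs.length y' := by rw [hb']; exact hb'red.symm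
    omega
  have hared2 : cs.IsReduced (aJ ++ c) := by
    show cs.length (cs.wordProd (aJ ++ c)) = (aJ ++ c).length
    rw [hprod2, h8y, List.length_append, haplen]
    have : c.length = cs.length y := by rw [← hcprod]; exact hcred.symm
    omega
  have := BruhatAux.bruhatLE_of_subword cs hared1 hared2 (hcsub.append_left aJ)
  rw [hprod1, hprod2] at this
  exact this
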